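/- arXiv:1601.05614 — 7 statements merged into one kernel-verified Lean document; each statement's English description precedes it below -/
import Mathlib

section
/- If (X,f) is exact and f is injective, then X is a singleton. -/
section

open Set Function

variable {X : Type*} [TopologicalSpace X]

def IsTopologicallyExact (f : X → X) : Prop :=
  ∀ U V : Set X, IsOpen U → U.Nonempty → IsOpen V → V.Nonempty →
    ∃ n : ℕ, 1 ≤ n ∧ (f^[n] '' U ∩ f^[n] '' V).Nonempty

/-- Injective iterates cannot make disjoint open sets meet, so under exactness any two nonempty
open sets already meet. -/
theorem IsTopologicallyExact.isPreirreducible_univ {f : X → X} (hexact : IsTopologicallyExact f)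
    (hinj : Injective f) : IsPreirreducible (univ : Set X) := by
  intro U V hU hV hUne hVne
  rw [univ_inter] at hUne hVne ⊢
  obtain ⟨n, -, hmeet⟩ := hexact U V hU hUne hV hVne
  rw [← image_inter (hinj.iterate n)] at hmeet
  exact hmeet.of_image

theorem IsTopologicallyExact.subsingleton [T2Space X] {f : X → X}
    (hexact : IsTopologicallyExact f) (hinj : Injective f) : (univ : Set X).Subsingleton :=
  (hexact.isPreirreducible_univ hinj).subsingleton

end

theorem stmt_7_general {X : Type*} [MetricSpace X] [Nonempty X]
    (f : X → X)
    (hexact : ∀ U V : Set X, IsOpen U → U.Nonempty → IsOpen V → V.Nonempty →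
      ∃ n : ℕ, 1 ≤ n ∧ (f^[n] '' U ∩ f^[n] '' V).Nonempty)
    (hinj : Function.Injective f) :
    ∃ x : X, (Set.univ : Set X) = {x} := by
  obtain ⟨x⟩ := ‹Nonempty X›
  exact ⟨x, (IsTopologicallyExact.subsingleton hexact hinj).eq_singleton_of_mem (Set.mem_univ x)⟩

theorem stmt_7 {X : Type*} [MetricSpace X] [CompactSpace X] [Nonempty X]
    (f : X → X) (hf : Continuous f)
    (hexact : ∀ U V : Set X, IsOpen U → U.Nonempty → IsOpen V → V.Nonempty →
      ∃ n : ℕ, 1 ≤ n ∧ (f^[n] '' U ∩ f^[n] '' V).Nonempty)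
    (hinj : Function.Injective f) :
    ∃ x : X, (Set.univ : Set X) = {x} :=
  stmt_7_general f hexact hinj
end

section
/- (X,f) is fully exact if and only if for every pair of nonempty open sets U,V ⊆ X, the set ⋃_{n≥1} (f^n(U) ∩ f^n(V)) has nonempty interior. -/
/-!
One direction is monotonicity of the interior. Conversely, shrink `U` and `V` to nonempty open
sets `U'`, `V'` whose closures lie in `U` and `V`. By compactness the sets
`f^[n] '' closure U' ∩ f^[n] '' closure V'` are closed, and their union over `n ≥ 1` contains
`⋃ n ≥ 1, f^[n] '' U' ∩ f^[n] '' V'`, which has nonempty interior; by the Baire category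
theorem one of them has nonempty interior, and it lies in `f^[n] '' U ∩ f^[n] '' V`.
-/

open Set

theorem exists_nonempty_interior_of_nonempty_interior_iUnion {X ι : Type*} [TopologicalSpace X]
    [BaireSpace X] [Countable ι] {K : ι → Set X} (hK : ∀ i, IsClosed (K i))
    (h : (interior (⋃ i, K i)).Nonempty) : ∃ i, (interior (K i)).Nonempty := by
  by_contra! hint
  have hmeagre : IsMeagre (⋃ i, K i) :=
    isMeagre_iUnion fun i => ((hK i).isNowhereDense_iff.2 (hint i)).isMeagre
  exact not_isMeagre_of_isOpen isOpen_interior h (hmeagre.mono interior_subset)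

theorem IsOpen.exists_isOpen_nonempty_closure_subset {X : Type*} [TopologicalSpace X]
    [RegularSpace X] {U : Set X} (hU : IsOpen U) (hne : U.Nonempty) :
    ∃ W, IsOpen W ∧ W.Nonempty ∧ closure W ⊆ U := by
  obtain ⟨x, hx⟩ := hne
  obtain ⟨W, ⟨hxW, hW⟩, hWU⟩ := (hasBasis_opens_closure x).mem_iff.mp (hU.mem_nhds hx)
  exact ⟨W, hW, ⟨x, hxW⟩, hWU⟩

theorem isClosed_image_iterate_inter_image_iterate {X : Type*} [TopologicalSpace X]
    [CompactSpace X] [T2Space X] {f : X → X} (hf : Continuous f) {A B : Set X}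
    (hA : IsClosed A) (hB : IsClosed B) (n : ℕ) : IsClosed (f^[n] '' A ∩ f^[n] '' B) :=
  ((hA.isCompact.image (hf.iterate n)).isClosed).inter
    (hB.isCompact.image (hf.iterate n)).isClosed

theorem stmt_8 {X : Type*} [MetricSpace X] [CompactSpace X]
    (f : X → X) (hf : Continuous f) :
    (∀ U V : Set X, IsOpen U → U.Nonempty → IsOpen V → V.Nonempty →
      ∃ n : ℕ, 1 ≤ n ∧ (interior (f^[n] '' U ∩ f^[n] '' V)).Nonempty) ↔
    (∀ U V : Set X, IsOpen U → U.Nonempty → IsOpen V → V.Nonempty →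
      (interior (⋃ n : ℕ, ⋃ _ : 1 ≤ n, (f^[n] '' U ∩ f^[n] '' V))).Nonempty) := by
  refine ⟨fun h U V hU hUne hV hVne => ?_, fun h U V hU hUne hV hVne => ?_⟩
  · obtain ⟨n, hn, hint⟩ := h U V hU hUne hV hVne
    exact hint.mono (interior_mono (subset_iUnion₂_of_subset n hn subset_rfl))
  · obtain ⟨U', hU', hU'ne, hU'U⟩ := hU.exists_isOpen_nonempty_closure_subset hUne
    obtain ⟨V', hV', hV'ne, hV'V⟩ := hV.exists_isOpen_nonempty_closure_subset hVne
    let K : {n : ℕ // 1 ≤ n} → Set X := fun n => f^[n] '' closure U' ∩ f^[n] '' closure V'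
    have hsub : ⋃ n : ℕ, ⋃ _ : 1 ≤ n, (f^[n] '' U' ∩ f^[n] '' V') ⊆ ⋃ n, K n :=
      iUnion₂_subset fun n hn => subset_iUnion_of_subset ⟨n, hn⟩
        (inter_subset_inter (image_mono subset_closure) (image_mono subset_closure))
    obtain ⟨⟨n, hn⟩, hKn⟩ := exists_nonempty_interior_of_nonempty_interior_iUnion (K := K)
      (fun n => isClosed_image_iterate_inter_image_iterate hf isClosed_closure isClosed_closure n)
      ((h U' V' hU' hU'ne hV' hV'ne).mono (interior_mono hsub))
    exact ⟨n, hn, hKn.mono <|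
      interior_mono (inter_subset_inter (image_mono hU'U) (image_mono hV'V))⟩
end

section
/- If (X,f) is topologically transitive and X is infinite, then for every x ∈ X and n ≥ 1, the set f^{-n}(x) is nowhere dense; consequently the negative orbit ⋃_{n≥1} f^{-n}(x) is of first category (meagre). -/
/-!
Suppose `f^[n]` is constant, equal to `x`, on a nonempty open set `V`. A return of `V` to itself
makes `x` periodic, so its forward orbit `O` is finite. Every return time `t ≥ n` of an open
`W ⊆ V` gives `f^[t] '' W ⊆ O`, and returns with arbitrarily large times exist; hence `O` meets
every open subset of `V`, i.e. `V ⊆ closure O`. Since `closure O` is forward invariant, it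
contains the dense set `⋃ k ≥ 1, f^[k] '' V`, so the finite set `O` is dense and `X = O` is finite.
-/

open Set Function

def IsTopTransitive {X : Type*} [TopologicalSpace X] (f : X → X) : Prop :=
  ∀ U : Set X, IsOpen U → U.Nonempty → Dense (⋃ n : ℕ, ⋃ _ : 1 ≤ n, f^[n] '' U)

theorem Function.IsPeriodicPt.finite_range_iterate {α : Type*} {f : α → α} {x : α} {m : ℕ}
    (hx : IsPeriodicPt f m x) (hm : 0 < m) : (range fun k => f^[k] x).Finite :=
  ((finite_Iio m).image fun k => f^[k] x).subset <|
    range_subset_iff.2 fun k => ⟨k % m, Nat.mod_lt _ hm, hx.iterate_mod_apply k⟩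

namespace IsTopTransitive

variable {X : Type*} [TopologicalSpace X] {f : X → X} {U : Set X}

theorem exists_iterate_mem (htt : IsTopTransitive f) (hU : IsOpen U) (hne : U.Nonempty) :
    ∃ m, 1 ≤ m ∧ ∃ u ∈ U, f^[m] u ∈ U := by
  obtain ⟨y, hyU, hy⟩ := (htt U hU hne).inter_open_nonempty U hU hne
  simp only [mem_iUnion, mem_image] at hy
  obtain ⟨m, hm, u, huU, rfl⟩ := hy
  exact ⟨m, hm, u, huU, hyU⟩

theorem exists_iterate_mem_of_le (htt : IsTopTransitive f) (hf : Continuous f) (hU : IsOpen U)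
    (hne : U.Nonempty) (N : ℕ) : ∃ m, N ≤ m ∧ ∃ u ∈ U, f^[m] u ∈ U := by
  suffices ∃ m, N ≤ m ∧ ∃ V ⊆ U, IsOpen V ∧ V.Nonempty ∧ MapsTo f^[m] V U by
    obtain ⟨m, hm, V, hVU, -, ⟨v, hv⟩, hVm⟩ := this
    exact ⟨m, hm, v, hVU hv, hVm hv⟩
  -- shrinking `V` to `V ∩ f^[s] ⁻¹' V` for a return time `s` of `V` adds `s` to `m`
  induction N with
  | zero => exact ⟨0, le_rfl, U, subset_rfl, hU, hne, mapsTo_id U⟩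
  | succ N ih =>
    obtain ⟨m, hm, V, hVU, hV, hVne, hVm⟩ := ih
    obtain ⟨s, hs, v, hv, hsv⟩ := htt.exists_iterate_mem hV hVne
    refine ⟨m + s, by omega, V ∩ f^[s] ⁻¹' V, inter_subset_left.trans hVU,
      hV.inter ((hf.iterate s).isOpen_preimage V hV), ⟨v, hv, hsv⟩, fun w hw => ?_⟩
    rw [iterate_add_apply]
    exact hVm hw.2

theorem dense_of_subset_of_mapsTo (htt : IsTopTransitive f) (hU : IsOpen U) (hne : U.Nonempty)
    {s : Set X} (hUs : U ⊆ s) (hs : MapsTo f s s) : Dense s :=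
  (htt U hU hne).mono <| iUnion₂_subset fun n _ => (hs.iterate n).mono_left hUs |>.image_subset

theorem dense_range_iterate_of_forall_iterate_eq (htt : IsTopTransitive f) (hf : Continuous f)
    (hU : IsOpen U) (hne : U.Nonempty) {n : ℕ} {x : X} (hUx : ∀ u ∈ U, f^[n] u = x) :
    Dense (range fun k => f^[k] x) := by
  set O := range fun k => f^[k] x
  have hO : MapsTo f O O := by
    rintro _ ⟨k, rfl⟩
    exact ⟨k + 1, iterate_succ_apply' f k x⟩
  have hUO : U ⊆ closure O := by
    by_contra hsub
    obtain ⟨t, ht, w, ⟨hw, -⟩, -, hO'⟩ :=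
      htt.exists_iterate_mem_of_le hf (hU.sdiff isClosed_closure) (sdiff_nonempty.2 hsub) n
    refine hO' (subset_closure ⟨t - n, ?_⟩)
    show f^[t - n] x = f^[t] w
    rw [← hUx w hw, ← iterate_add_apply, Nat.sub_add_cancel ht]
  exact (htt.dense_of_subset_of_mapsTo hU hne hUO (hO.closure hf)).of_closure

theorem isNowhereDense_preimage_iterate_singleton [T1Space X] [Infinite X]
    (htt : IsTopTransitive f) (hf : Continuous f) (n : ℕ) (x : X) :
    IsNowhereDense (f^[n] ⁻¹' {x}) := by
  rw [(isClosed_singleton.preimage (hf.iterate n)).isNowhereDense_iff, ← not_nonempty_iff_eq_empty]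
  intro hne
  set V := interior (f^[n] ⁻¹' {x})
  have hVx : ∀ v ∈ V, f^[n] v = x := fun v hv => (interior_subset hv : v ∈ f^[n] ⁻¹' {x})
  obtain ⟨m, hm, v, hv, hmv⟩ := htt.exists_iterate_mem isOpen_interior hne
  have hx : IsPeriodicPt f m x := calc
    f^[m] x = f^[m] (f^[n] v) := by rw [hVx v hv]
    _ = f^[n] (f^[m] v) := (Commute.iterate_iterate_self f m n).eq v
    _ = x := hVx _ hmv
  have hfin := hx.finite_range_iterate hm
  have hdense := htt.dense_range_iterate_of_forall_iterate_eq hf isOpen_interior hne hVx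
  have huniv : (range fun k => f^[k] x) = univ := by
    rw [← hfin.isClosed.closure_eq, hdense.closure_eq]
  exact infinite_univ (huniv ▸ hfin)

end IsTopTransitive

theorem stmt_12_general {X : Type*} [MetricSpace X]
    (f : X → X) (hf : Continuous f) (hinf : (Set.univ : Set X).Infinite)
    (htt : ∀ U : Set X, IsOpen U → U.Nonempty →
      Dense (⋃ n : ℕ, ⋃ _ : 1 ≤ n, f^[n] '' U)) :
    ∀ x : X, (∀ n : ℕ, 1 ≤ n → IsNowhereDense (f^[n] ⁻¹' {x})) ∧
      IsMeagre (⋃ n : ℕ, ⋃ _ : 1 ≤ n, f^[n] ⁻¹' {x}) := by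
  have : Infinite X := infinite_univ_iff.1 hinf
  have hnd (n : ℕ) (x : X) : IsNowhereDense (f^[n] ⁻¹' {x}) :=
    IsTopTransitive.isNowhereDense_preimage_iterate_singleton htt hf n x
  exact fun x => ⟨fun n _ => hnd n x,
    isMeagre_iUnion fun n => isMeagre_iUnion fun _ => (hnd n x).isMeagre⟩

theorem stmt_12 {X : Type*} [MetricSpace X] [CompactSpace X]
    (f : X → X) (hf : Continuous f) (hinf : (Set.univ : Set X).Infinite)
    (htt : ∀ U : Set X, IsOpen U → U.Nonempty →
      Dense (⋃ n : ℕ, ⋃ _ : 1 ≤ n, f^[n] '' U)) :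
    ∀ x : X, (∀ n : ℕ, 1 ≤ n → IsNowhereDense (f^[n] ⁻¹' {x})) ∧
      IsMeagre (⋃ n : ℕ, ⋃ _ : 1 ≤ n, f^[n] ⁻¹' {x}) :=
  stmt_12_general f hf hinf htt
end

section
/- If (X,f) is strongly transitive, then for every nonempty open U ⊆ X and every x ∈ X, the set N(U,x) = {n ≥ 1 : x ∈ f^n(U)} is infinite. -/
/-! A preimage `u ∈ U` of `x` under `f^[n]` is itself covered by some `f^[k] '' U` with `k ≥ 1`,
so `x ∈ f^[n + k] '' U`: the return times of `x` to `U` have no largest element. -/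

theorem Set.infinite_of_nonempty_of_forall_exists_gt {α : Type*} [Preorder α] {s : Set α}
    (hne : s.Nonempty) (h : ∀ a ∈ s, ∃ b ∈ s, a < b) : s.Infinite := by
  intro hfin
  obtain ⟨a, ha⟩ := hfin.exists_maximal hne
  obtain ⟨b, hb, hab⟩ := h a ha.prop
  exact ha.not_gt hb hab

namespace Function

variable {α : Type*} {f : α → α} {U : Set α}

theorem mem_image_iterate_add {x : α} {m n : ℕ} (hx : x ∈ f^[m] '' (f^[n] '' U)) :
    x ∈ f^[m + n] '' U := by
  rwa [iterate_add, Set.image_comp]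

theorem infinite_setOf_mem_image_iterate (h : ∀ y, ∃ k, 1 ≤ k ∧ y ∈ f^[k] '' U) (x : α) :
    {n : ℕ | 1 ≤ n ∧ x ∈ f^[n] '' U}.Infinite := by
  refine Set.infinite_of_nonempty_of_forall_exists_gt (h x) ?_
  rintro n ⟨-, u, -, rfl⟩
  obtain ⟨k, hk, hu⟩ := h u
  exact ⟨n + k, ⟨by omega, mem_image_iterate_add (Set.mem_image_of_mem _ hu)⟩, by omega⟩

end Function

theorem stmt_14_general {X : Type*} [MetricSpace X]
    (f : X → X)
    (hst : ∀ U : Set X, IsOpen U → U.Nonempty →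
      (⋃ n : ℕ, ⋃ _ : 1 ≤ n, f^[n] '' U) = Set.univ) :
    ∀ U : Set X, IsOpen U → U.Nonempty → ∀ x : X,
      {n : ℕ | 1 ≤ n ∧ x ∈ f^[n] '' U}.Infinite := by
  intro U hU hUne
  refine Function.infinite_setOf_mem_image_iterate fun y => ?_
  simpa using (hst U hU hUne).ge (Set.mem_univ y)

theorem stmt_14 {X : Type*} [MetricSpace X] [CompactSpace X]
    (f : X → X) (hf : Continuous f)
    (hst : ∀ U : Set X, IsOpen U → U.Nonempty →
      (⋃ n : ℕ, ⋃ _ : 1 ≤ n, f^[n] '' U) = Set.univ) :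
    ∀ U : Set X, IsOpen U → U.Nonempty → ∀ x : X,
      {n : ℕ | 1 ≤ n ∧ x ∈ f^[n] '' U}.Infinite :=
  stmt_14_general f hst
end

section
/- If f : X → X is an open continuous map on a compact metric space, then (X,f) is strongly transitive if and only if it is very strongly transitive (for every nonempty open U there is N with ⋃_{n=1}^N f^n(U) = X), if and only if X contains no proper nonempty closed −invariant subset. -/
/-!
The union `S = ⋃_{n ≥ 1} fⁿ(U)` of the forward images of an open set `U` is open (as `f` is open)
and satisfies `f(S) ⊆ S`, so its complement is a closed −invariant set; conversely the complement
of a closed −invariant set `A` is an open set mapped into itself, whose forward images never meet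
`A`. By compactness, some member of the increasing open cover `N ↦ ⋃_{n=1}^N fⁿ(U)` of `X`
is already all of `X`.
-/

open Set Function

theorem IsOpenMap.iterate {X : Type*} [TopologicalSpace X] {f : X → X} (hf : IsOpenMap f) :
    ∀ n : ℕ, IsOpenMap f^[n]
  | 0 => IsOpenMap.id
  | n + 1 => by rw [iterate_succ]; exact (hf.iterate n).comp hf

section PositiveOrbit

variable {X : Type*} (f : X → X) (U : Set X)

def positiveOrbit : Set X := ⋃ n : ℕ, ⋃ _ : 1 ≤ n, f^[n] '' U

def partialOrbit (N : ℕ) : Set X := ⋃ n ∈ Icc 1 N, f^[n] '' U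

variable {f U}

theorem monotone_partialOrbit : Monotone (partialOrbit f U) := fun _ _ hMN =>
  biUnion_subset_biUnion_left (Icc_subset_Icc_right hMN)

theorem iUnion_partialOrbit : ⋃ N, partialOrbit f U N = positiveOrbit f U := by
  ext x
  simp only [partialOrbit, positiveOrbit, mem_iUnion, mem_Icc, exists_prop]
  exact ⟨fun ⟨_, n, ⟨hn, _⟩, hx⟩ => ⟨n, hn, hx⟩, fun ⟨n, hn, hx⟩ => ⟨n, n, ⟨hn, le_rfl⟩, hx⟩⟩

theorem partialOrbit_subset_positiveOrbit (N : ℕ) : partialOrbit f U N ⊆ positiveOrbit f U :=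
  iUnion_partialOrbit (f := f) ▸ subset_iUnion (partialOrbit f U) N

theorem image_subset_positiveOrbit : f '' U ⊆ positiveOrbit f U :=
  subset_iUnion₂_of_subset 1 le_rfl (by rw [iterate_one])

theorem mapsTo_positiveOrbit : MapsTo f (positiveOrbit f U) (positiveOrbit f U) := by
  intro x hx
  obtain ⟨n, hn, y, hy, rfl⟩ : ∃ n, 1 ≤ n ∧ ∃ y ∈ U, f^[n] y = x := by
    simpa only [positiveOrbit, mem_iUnion, mem_image, exists_prop] using hx
  exact mem_iUnion₂_of_mem (Nat.le_add_left 1 n) ⟨y, hy, iterate_succ_apply' f n y⟩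

theorem positiveOrbit_subset_of_mapsTo (h : MapsTo f U U) : positiveOrbit f U ⊆ U :=
  iUnion₂_subset fun n _ => (h.iterate n).image_subset

variable [TopologicalSpace X]

theorem isOpen_partialOrbit (hf : IsOpenMap f) (hU : IsOpen U) (N : ℕ) :
    IsOpen (partialOrbit f U N) :=
  isOpen_biUnion fun n _ => hf.iterate n U hU

theorem isOpen_positiveOrbit (hf : IsOpenMap f) (hU : IsOpen U) : IsOpen (positiveOrbit f U) :=
  iUnion_partialOrbit (f := f) ▸ isOpen_iUnion (isOpen_partialOrbit hf hU)

theorem exists_partialOrbit_eq_univ [CompactSpace X] (hf : IsOpenMap f) (hU : IsOpen U)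
    (h : positiveOrbit f U = univ) : ∃ N, 1 ≤ N ∧ partialOrbit f U N = univ := by
  obtain ⟨N, hN⟩ := isCompact_univ.elim_directed_cover (partialOrbit f U)
    (isOpen_partialOrbit hf hU) (by rw [iUnion_partialOrbit, h])
    monotone_partialOrbit.directed_le
  exact ⟨max N 1, le_max_right N 1,
    eq_univ_of_univ_subset (hN.trans (monotone_partialOrbit (le_max_left N 1)))⟩

theorem forall_positiveOrbit_eq_univ_iff_exists_partialOrbit [CompactSpace X]
    (hf : IsOpenMap f) :
    (∀ U : Set X, IsOpen U → U.Nonempty → positiveOrbit f U = univ) ↔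
      ∀ U : Set X, IsOpen U → U.Nonempty → ∃ N, 1 ≤ N ∧ partialOrbit f U N = univ :=
  ⟨fun h U hU hne => exists_partialOrbit_eq_univ hf hU (h U hU hne),
    fun h U hU hne => let ⟨N, _, hN⟩ := h U hU hne
      eq_univ_of_univ_subset (hN ▸ partialOrbit_subset_positiveOrbit N)⟩

theorem forall_positiveOrbit_eq_univ_iff_closed_invariant (hf : IsOpenMap f) :
    (∀ U : Set X, IsOpen U → U.Nonempty → positiveOrbit f U = univ) ↔
      ∀ A : Set X, IsClosed A → A.Nonempty → f ⁻¹' A ⊆ A → A = univ := by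
  constructor
  · intro h A hA ⟨a, ha⟩ hinv
    by_contra hne
    have hmaps : MapsTo f Aᶜ Aᶜ := fun _ hx hfx => hx (hinv hfx)
    have hsub := positiveOrbit_subset_of_mapsTo hmaps
    rw [h Aᶜ hA.isOpen_compl (nonempty_compl.2 hne)] at hsub
    exact hsub (mem_univ a) ha
  · intro h U hU hne
    set S := positiveOrbit f U
    have hSinv : f ⁻¹' Sᶜ ⊆ Sᶜ := fun _ hx hxS => hx (mapsTo_positiveOrbit hxS)
    by_contra hS
    have hSempty : S = ∅ := compl_univ_iff.1
      (h Sᶜ (isOpen_positiveOrbit hf hU).isClosed_compl (nonempty_compl.2 hS) hSinv)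
    exact (hne.image f).ne_empty (subset_empty_iff.1 (hSempty ▸ image_subset_positiveOrbit))

end PositiveOrbit

theorem stmt_15_general {X : Type*} [MetricSpace X] [CompactSpace X]
    (f : X → X) (hopen : IsOpenMap f) :
    ((∀ U : Set X, IsOpen U → U.Nonempty →
        (⋃ n : ℕ, ⋃ _ : 1 ≤ n, f^[n] '' U) = Set.univ) ↔
     (∀ U : Set X, IsOpen U → U.Nonempty →
        ∃ N : ℕ, 1 ≤ N ∧ (⋃ n ∈ Set.Icc 1 N, f^[n] '' U) = Set.univ)) ∧
    ((∀ U : Set X, IsOpen U → U.Nonempty →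
        (⋃ n : ℕ, ⋃ _ : 1 ≤ n, f^[n] '' U) = Set.univ) ↔
     (∀ A : Set X, IsClosed A → A.Nonempty → f ⁻¹' A ⊆ A → A = Set.univ)) :=
  ⟨forall_positiveOrbit_eq_univ_iff_exists_partialOrbit hopen,
    forall_positiveOrbit_eq_univ_iff_closed_invariant hopen⟩

theorem stmt_15 {X : Type*} [MetricSpace X] [CompactSpace X]
    (f : X → X) (hf : Continuous f) (hopen : IsOpenMap f) :
    ((∀ U : Set X, IsOpen U → U.Nonempty →
        (⋃ n : ℕ, ⋃ _ : 1 ≤ n, f^[n] '' U) = Set.univ) ↔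
     (∀ U : Set X, IsOpen U → U.Nonempty →
        ∃ N : ℕ, 1 ≤ N ∧ (⋃ n ∈ Set.Icc 1 N, f^[n] '' U) = Set.univ)) ∧
    ((∀ U : Set X, IsOpen U → U.Nonempty →
        (⋃ n : ℕ, ⋃ _ : 1 ≤ n, f^[n] '' U) = Set.univ) ↔
     (∀ A : Set X, IsClosed A → A.Nonempty → f ⁻¹' A ⊆ A → A = Set.univ)) :=
  stmt_15_general f hopen
end

section
/- If f : X → X is a homeomorphism of a compact metric space, then (X,f) is strongly transitive if and only if it is minimal. -/
/-!
The closure of a forward orbit is closed and forward-invariant, so minimality means that the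
only nonempty closed forward-invariant set is `X`. Strong transitivity of `f` says that every
backward `f`-orbit meets every nonempty open set, i.e. it is minimality of `f⁻¹`. By compactness, a nonempty closed `f`-invariant set `K` contains the nonempty closed set
`⋂ n, fⁿ(K)`, which is `f⁻¹`-invariant; hence minimality of `f⁻¹` implies minimality of `f`,
and by symmetry the converse.
-/

open Set Function

def IsMinimalMap {X : Type*} [TopologicalSpace X] (g : X → X) : Prop :=
  ∀ K : Set X, IsClosed K → K.Nonempty → MapsTo g K K → K = univ

theorem dense_forwardOrbit_iff_isMinimalMap {X : Type*} [TopologicalSpace X] {g : X → X}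
    (hg : Continuous g) :
    (∀ x : X, Dense {y : X | ∃ n : ℕ, 1 ≤ n ∧ g^[n] x = y}) ↔ IsMinimalMap g := by
  constructor
  · rintro hdense K hK ⟨x, hx⟩ hKg
    have horbit : {y : X | ∃ n : ℕ, 1 ≤ n ∧ g^[n] x = y} ⊆ K := by
      rintro y ⟨n, -, rfl⟩
      exact hKg.iterate n hx
    exact eq_univ_of_univ_subset ((hdense x).closure_eq ▸ closure_minimal horbit hK)
  · intro hmin x
    set S : Set X := {y : X | ∃ n : ℕ, 1 ≤ n ∧ g^[n] x = y}
    have hS : MapsTo g S S := by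
      rintro y ⟨n, hn, rfl⟩
      exact ⟨n + 1, by omega, iterate_succ_apply' g n x⟩
    exact dense_iff_closure_eq.2 <| hmin _ isClosed_closure
      ⟨g x, subset_closure ⟨1, le_rfl, rfl⟩⟩ (hS.closure hg)

theorem Homeomorph.forall_iUnion_iterate_image_eq_univ_iff {X : Type*} [TopologicalSpace X]
    (f : X ≃ₜ X) :
    (∀ U : Set X, IsOpen U → U.Nonempty → (⋃ n : ℕ, ⋃ _ : 1 ≤ n, (⇑f)^[n] '' U) = univ) ↔
      ∀ x : X, Dense {y : X | ∃ n : ℕ, 1 ≤ n ∧ (⇑f.symm)^[n] x = y} := by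
  simp only [dense_iff_inter_open, eq_univ_iff_forall, mem_iUnion, mem_image]
  refine ⟨fun h x U hU hUne => ?_, fun h U hU hUne x => ?_⟩
  · obtain ⟨n, hn, u, hu, rfl⟩ := h U hU hUne x
    exact ⟨u, hu, n, hn, LeftInverse.iterate f.symm_apply_apply n u⟩
  · obtain ⟨u, hu, n, hn, rfl⟩ := h x U hU hUne
    exact ⟨n, hn, _, hu, LeftInverse.iterate f.apply_symm_apply n x⟩

theorem Homeomorph.isMinimalMap_of_isMinimalMap_symm {X : Type*} [TopologicalSpace X]
    [CompactSpace X] (f : X ≃ₜ X) (h : IsMinimalMap f.symm) : IsMinimalMap f := by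
  intro K hK hKne hKf
  set Z : ℕ → Set X := fun n => (⇑f)^[n] '' K
  have hZ_closed (n : ℕ) : IsClosed (Z n) := by
    rw [show Z n = (⇑f)^[n] '' K from rfl,
      image_eq_preimage_of_inverse (LeftInverse.iterate f.symm_apply_apply n)
        (LeftInverse.iterate f.apply_symm_apply n)]
    exact hK.preimage (f.symm.continuous.iterate n)
  have hZ_succ (n : ℕ) : Z (n + 1) ⊆ Z n := by
    simp only [Z, iterate_succ, image_comp]
    exact image_mono hKf.image_subset
  have hL : (⋂ n, Z n).Nonempty :=
    IsCompact.nonempty_iInter_of_sequence_nonempty_isCompact_isClosed Z hZ_succ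
      (fun n => hKne.image _) (by simpa [Z] using hK.isCompact) hZ_closed
  have hLf : MapsTo f.symm (⋂ n, Z n) (⋂ n, Z n) := by
    intro y hy
    refine mem_iInter.2 fun n => ?_
    obtain ⟨k, hk, rfl⟩ := mem_iInter.1 hy (n + 1)
    rw [iterate_succ_apply', f.symm_apply_apply]
    exact mem_image_of_mem _ hk
  have hLK : (⋂ n, Z n) ⊆ K := by simpa [Z] using iInter_subset Z 0
  exact eq_univ_of_univ_subset (h _ (isClosed_iInter hZ_closed) hL hLf ▸ hLK)

theorem stmt_17_general {X : Type*} [MetricSpace X] [CompactSpace X]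
    (f : X ≃ₜ X) :
    (∀ U : Set X, IsOpen U → U.Nonempty →
      (⋃ n : ℕ, ⋃ _ : 1 ≤ n, (⇑f)^[n] '' U) = Set.univ) ↔
    (∀ x : X, Dense {y : X | ∃ n : ℕ, 1 ≤ n ∧ (⇑f)^[n] x = y}) := by
  rw [f.forall_iUnion_iterate_image_eq_univ_iff,
    dense_forwardOrbit_iff_isMinimalMap f.symm.continuous,
    dense_forwardOrbit_iff_isMinimalMap f.continuous]
  exact ⟨f.isMinimalMap_of_isMinimalMap_symm,
    fun h => f.symm.isMinimalMap_of_isMinimalMap_symm (by simpa using h)⟩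

theorem stmt_17 {X : Type*} [MetricSpace X] [CompactSpace X] [Nonempty X]
    (f : X ≃ₜ X) :
    (∀ U : Set X, IsOpen U → U.Nonempty →
      (⋃ n : ℕ, ⋃ _ : 1 ≤ n, (⇑f)^[n] '' U) = Set.univ) ↔
    (∀ x : X, Dense {y : X | ∃ n : ℕ, 1 ≤ n ∧ (⇑f)^[n] x = y}) :=
  stmt_17_general f
end

section
/- If (X,f) is locally eventually onto (for every nonempty open U there exists N with f^N(U) = X), then (X,f) has dense periodic sets: for every nonempty open U there exists N ≥ 1 and a nonempty closed A ⊆ U with f^N(A) = A. -/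
/-! If `V ⊆ g '' V`, every point of `V` has a preimage in `V`, so the points whose whole forward
orbit stays in `V` form a closed set `A` with `g '' A = A`; it is nonempty by compactness, since
every finite orbit segment can be pulled back inside `V`. For a locally eventually onto `f`, a
closed neighbourhood `V ⊆ U` of a point satisfies `V ⊆ f^[N] '' V` for some `N ≥ 1`. -/

open Function Set

section Backward

variable {X : Type*} {g : X → X} {V : Set X}

theorem exists_forall_le_iterate_mem (hVg : V ⊆ g '' V) (hV : V.Nonempty) (n : ℕ) :
    ∃ x, ∀ k ≤ n, g^[k] x ∈ V := by
  induction n with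
  | zero =>
    obtain ⟨x, hx⟩ := hV
    exact ⟨x, fun k hk => by rwa [Nat.le_zero.1 hk]⟩
  | succ n ih =>
    obtain ⟨x, hx⟩ := ih
    obtain ⟨w, hw, rfl⟩ := hVg (hx 0 n.zero_le)
    refine ⟨w, fun k hk => ?_⟩
    cases k with
    | zero => exact hw
    | succ k => rw [iterate_succ_apply]; exact hx k (by omega)

theorem image_iInter_preimage_iterate_eq (hVg : V ⊆ g '' V) :
    g '' (⋂ k, g^[k] ⁻¹' V) = ⋂ k, g^[k] ⁻¹' V := by
  simp only [Set.ext_iff, mem_image, mem_iInter, mem_preimage]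
  refine fun x => ⟨?_, fun hx => ?_⟩
  · rintro ⟨y, hy, rfl⟩ k
    rw [← iterate_succ_apply]
    exact hy (k + 1)
  · obtain ⟨w, hw, rfl⟩ := hVg (hx 0)
    refine ⟨w, fun k => ?_, rfl⟩
    cases k with
    | zero => exact hw
    | succ k => rw [iterate_succ_apply]; exact hx k

end Backward

theorem exists_isClosed_nonempty_image_eq_of_subset_image {X : Type*} [TopologicalSpace X]
    [CompactSpace X] {g : X → X} {V : Set X} (hg : Continuous g) (hV : IsClosed V)
    (hVne : V.Nonempty) (hVg : V ⊆ g '' V) :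
    ∃ A ⊆ V, IsClosed A ∧ A.Nonempty ∧ g '' A = A := by
  refine ⟨⋂ k, g^[k] ⁻¹' V, iInter_subset_of_subset 0 subset_rfl,
    isClosed_iInter fun k => hV.preimage (hg.iterate k), ?_, image_iInter_preimage_iterate_eq hVg⟩
  have hfinite : ∀ u : Finset ℕ, (univ ∩ ⋂ k ∈ u, g^[k] ⁻¹' V).Nonempty := fun u => by
    obtain ⟨x, hx⟩ := exists_forall_le_iterate_mem hVg hVne (u.sup id)
    exact ⟨x, mem_univ x, mem_iInter₂.2 fun k hk => hx k (u.le_sup (f := id) hk)⟩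
  simpa using isCompact_univ.inter_iInter_nonempty _
    (fun k => hV.preimage (hg.iterate k)) hfinite

theorem stmt_19_general {X : Type*} [MetricSpace X] [CompactSpace X]
    (f : X → X) (hf : Continuous f)
    (hleo : ∀ U : Set X, IsOpen U → U.Nonempty → ∃ N : ℕ, 1 ≤ N ∧ f^[N] '' U = Set.univ) :
    ∀ U : Set X, IsOpen U → U.Nonempty →
      ∃ N : ℕ, 1 ≤ N ∧ ∃ A : Set X, A ⊆ U ∧ IsClosed A ∧ A.Nonempty ∧ f^[N] '' A = A := by
  rintro U hU ⟨x, hx⟩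
  obtain ⟨V, hVx, hVc, hVU⟩ := exists_mem_nhds_isClosed_subset (hU.mem_nhds hx)
  obtain ⟨N, hN, honto⟩ :=
    hleo (interior V) isOpen_interior ⟨x, mem_interior_iff_mem_nhds.2 hVx⟩
  have hVN : V ⊆ f^[N] '' V := fun y _ =>
    image_mono interior_subset (honto ▸ mem_univ y)
  obtain ⟨A, hAV, hA⟩ := exists_isClosed_nonempty_image_eq_of_subset_image (hf.iterate N) hVc
    ⟨x, mem_of_mem_nhds hVx⟩ hVN
  exact ⟨N, hN, A, hAV.trans hVU, hA⟩

theorem stmt_19 {X : Type*} [MetricSpace X] [CompactSpace X] [Nonempty X]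
    (f : X → X) (hf : Continuous f)
    (hleo : ∀ U : Set X, IsOpen U → U.Nonempty → ∃ N : ℕ, 1 ≤ N ∧ f^[N] '' U = Set.univ) :
    ∀ U : Set X, IsOpen U → U.Nonempty →
      ∃ N : ℕ, 1 ≤ N ∧ ∃ A : Set X, A ⊆ U ∧ IsClosed A ∧ A.Nonempty ∧ f^[N] '' A = A :=
  stmt_19_general f hf hleo
end
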